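/- arXiv:2406.02800 — 3 statements merged into one kernel-verified Lean document; each statement's English description precedes it below -/
import Mathlib

section
/- For every T > 0, lim_{T → ∞} E[Z_T²] = β²/b². Equivalently, ∫₀^∞ ∫₀^∞ e^{−b(t+s)} · ½ (g(t) + g(s) − g(|t − s|)) ds dt = β²/b². -/
/-!
Expanding the square and applying Fubini, `E[Z_T²]` is the integral of the covariance kernel
`e^{-b(t+s)} (g t + g s - g |t - s|) / 2` over `(0, T]²`, which converges to its integral over the
open quadrant. Two of the three terms of the kernel factor; the third is symmetric in `(t, s)`,
and the shears `(t, u) ↦ (t, t + u)`, `(t, u) ↦ (t + u, t)` turn each half of the quadrant into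
`e^{-2bt} e^{-bu} g u`, so the quadrant integral is `J / (2b)` with `J = ∫ e^{-bu} g u = 2β²/b`.

Fubini needs `B t ∈ L²` for `t > 0`, and the covariance identity only gives `∫ B_t² = g t` with
Bochner's junk value `0` for non-integrable functions. So we show `g δ ≠ 0` for `δ > 0`: otherwise
`B (t + δ) = B t` a.s. for all large `t`, whence `g (n δ) = 0` for all `n`, contradicting
`g → α² ≠ 0`.
-/

open MeasureTheory Filter Set Real

theorem integral_exp_neg_mul_Ioi_zero {b : ℝ} (hb : 0 < b) :
    ∫ x in Ioi 0, exp (-b * x) = 1 / b := by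
  rw [integral_exp_mul_Ioi (neg_lt_zero.2 hb), mul_zero, exp_zero]
  field_simp

theorem MeasureTheory.IntegrableOn.mul_prod {α β L : Type*} [MeasurableSpace α]
    [MeasurableSpace β] [NormedRing L] {μ : Measure α} {ν : Measure β} [SFinite μ] [SFinite ν]
    {f : α → L} {g : β → L} {s : Set α} {t : Set β} (hf : IntegrableOn f s μ)
    (hg : IntegrableOn g t ν) :
    IntegrableOn (fun z : α × β => f z.1 * g z.2) (s ×ˢ t) (μ.prod ν) := by
  rw [IntegrableOn, ← Measure.prod_restrict]
  exact Integrable.mul_prod hf hg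

theorem setIntegral_Ioi_prod_Ioi_eq_shear {E : Type*} [NormedAddCommGroup E] [NormedSpace ℝ E]
    {f : ℝ × ℝ → E} (hf : IntegrableOn f (Ioi 0 ×ˢ Ioi 0)) :
    ∫ p in Ioi 0 ×ˢ Ioi 0, f p =
      (∫ p in Ioi 0 ×ˢ Ioi 0, f (p.1, p.1 + p.2)) + ∫ p in Ioi 0 ×ˢ Ioi 0, f (p.1 + p.2, p.1) := by
  set W : Set (ℝ × ℝ) := {p | 0 < p.1 ∧ p.1 < p.2}
  set V : Set (ℝ × ℝ) := {p | 0 < p.2 ∧ p.2 ≤ p.1}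
  have hW : MeasurableSet W :=
    (measurableSet_lt measurable_const measurable_fst).inter
      (measurableSet_lt measurable_fst measurable_snd)
  have hV : MeasurableSet V :=
    (measurableSet_lt measurable_const measurable_snd).inter
      (measurableSet_le measurable_snd measurable_fst)
  have hWV : W ∪ V = Ioi 0 ×ˢ Ioi 0 := by
    ext ⟨x, y⟩
    simp only [W, V, mem_union, mem_ofPred_eq, mem_prod, mem_Ioi]
    grind
  have hdisj : Disjoint W V :=
    Set.disjoint_left.2 fun _ hpW hpV => hpV.2.not_gt hpW.2
  have hS : MeasurePreserving (fun p : ℝ × ℝ => (p.1, p.1 + p.2)) := by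
    simpa only [Measure.volume_eq_prod] using measurePreserving_prod_add volume volume
  have hS' : MeasurePreserving (fun p : ℝ × ℝ => (p.1 + p.2, p.1)) :=
    Measure.measurePreserving_swap.comp hS
  have hW' : (fun p : ℝ × ℝ => (p.1, p.1 + p.2)) ⁻¹' W = Ioi 0 ×ˢ Ioi 0 := by
    ext ⟨x, y⟩; simp [W]
  have hV' : (fun p : ℝ × ℝ => (p.1 + p.2, p.1)) ⁻¹' V = Ioi 0 ×ˢ Ici 0 := by
    ext ⟨x, y⟩; simp [V]
  have hIci : (Ioi 0 ×ˢ Ici 0 : Set (ℝ × ℝ)) =ᵐ[volume] Ioi 0 ×ˢ Ioi 0 := by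
    rw [Measure.volume_eq_prod]
    exact Measure.set_prod_ae_eq ae_eq_rfl Ioi_ae_eq_Ici.symm
  calc ∫ p in Ioi 0 ×ˢ Ioi 0, f p = ∫ p in W ∪ V, f p := by rw [hWV]
    _ = (∫ p in W, f p) + ∫ p in V, f p :=
      setIntegral_union hdisj hV (hf.mono_set (hWV ▸ subset_union_left))
        (hf.mono_set (hWV ▸ subset_union_right))
    _ = _ := by
      rw [← hS.setIntegral_preimage_emb (MeasurableEquiv.shearAddRight ℝ).measurableEmbedding f W,
        ← hS'.setIntegral_preimage_emb ((MeasurableEquiv.shearAddRight ℝ).trans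
          MeasurableEquiv.prodComm).measurableEmbedding f V,
        hW', hV', setIntegral_congr_set hIci]

theorem tendsto_setIntegral_Ioc_prod_Ioc {E : Type*} [NormedAddCommGroup E] [NormedSpace ℝ E]
    {μ : Measure (ℝ × ℝ)} {f : ℝ × ℝ → E} {a : ℝ} (hf : IntegrableOn f (Ioi a ×ˢ Ioi a) μ) :
    Tendsto (fun T => ∫ p in Ioc a T ×ˢ Ioc a T, f p ∂μ) atTop
      (nhds (∫ p in Ioi a ×ˢ Ioi a, f p ∂μ)) := by
  have hU : ⋃ T : ℝ, Ioc a T ×ˢ Ioc a T = Ioi a ×ˢ Ioi a := by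
    ext ⟨x, y⟩
    simp only [mem_iUnion, mem_prod, mem_Ioc, mem_Ioi]
    exact ⟨fun ⟨T, ⟨hx, _⟩, ⟨hy, _⟩⟩ => ⟨hx, hy⟩,
      fun ⟨hx, hy⟩ => ⟨max x y, ⟨hx, le_max_left _ _⟩, ⟨hy, le_max_right _ _⟩⟩⟩
  rw [← hU] at hf ⊢
  exact tendsto_setIntegral_of_monotone (fun _ => measurableSet_Ioc.prod measurableSet_Ioc)
    (fun _ _ hST => prod_mono (Ioc_subset_Ioc_right hST) (Ioc_subset_Ioc_right hST)) hf

theorem integral_sq_integral_eq_integral_prod {ι Ω : Type*} [MeasurableSpace ι]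
    [MeasurableSpace Ω] {μ : Measure ι} {P : Measure Ω} [IsFiniteMeasure μ] [SFinite P]
    {X : ι → Ω → ℝ} (hX : Measurable (Function.uncurry X)) (hL2 : ∀ᵐ t ∂μ, MemLp (X t) 2 P)
    {C : ℝ} (hC : ∀ᵐ t ∂μ, ∫ ω, X t ω ^ 2 ∂P ≤ C) :
    ∫ ω, (∫ t, X t ω ∂μ) ^ 2 ∂P = ∫ p, ∫ ω, X p.1 ω * X p.2 ω ∂P ∂μ.prod μ := by
  set F : ι × ι → Ω → ℝ := fun p ω => X p.1 ω * X p.2 ω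
  have hFm : AEStronglyMeasurable (Function.uncurry F) ((μ.prod μ).prod P) :=
    ((hX.comp (measurable_fst.fst.prodMk measurable_snd)).mul
      (hX.comp (measurable_fst.snd.prodMk measurable_snd))).aestronglyMeasurable
  have hpair : ∀ᵐ p ∂μ.prod μ, (MemLp (X p.1) 2 P ∧ ∫ ω, X p.1 ω ^ 2 ∂P ≤ C) ∧
      (MemLp (X p.2) 2 P ∧ ∫ ω, X p.2 ω ^ 2 ∂P ≤ C) :=
    (Measure.quasiMeasurePreserving_fst.ae (hL2.and hC)).and
      (Measure.quasiMeasurePreserving_snd.ae (hL2.and hC))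
  have hF : Integrable (Function.uncurry F) ((μ.prod μ).prod P) := by
    refine (integrable_prod_iff hFm).2 ⟨?_, ?_⟩
    · filter_upwards [hpair] with p ⟨⟨h1, _⟩, ⟨h2, _⟩⟩ using h1.integrable_mul h2
    refine Integrable.mono' (integrable_const C) hFm.norm.integral_prod_right' ?_
    filter_upwards [hpair] with p ⟨⟨h1, c1⟩, ⟨h2, c2⟩⟩
    rw [norm_of_nonneg (integral_nonneg fun _ => norm_nonneg _)]
    calc ∫ ω, ‖F p ω‖ ∂P ≤ ∫ ω, (X p.1 ω ^ 2 + X p.2 ω ^ 2) / 2 ∂P := by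
          refine integral_mono (h1.integrable_mul h2).norm
            ((h1.integrable_sq.fun_add h2.integrable_sq).div_const 2) fun ω => ?_
          rw [norm_mul, norm_eq_abs, norm_eq_abs, ← sq_abs (X p.1 ω), ← sq_abs (X p.2 ω)]
          linarith [two_mul_le_add_sq |X p.1 ω| |X p.2 ω|]
      _ = ((∫ ω, X p.1 ω ^ 2 ∂P) + ∫ ω, X p.2 ω ^ 2 ∂P) / 2 := by
          rw [integral_div, integral_add h1.integrable_sq h2.integrable_sq]
      _ ≤ C := by linarith
  calc ∫ ω, (∫ t, X t ω ∂μ) ^ 2 ∂P = ∫ ω, ∫ p, F p ω ∂μ.prod μ ∂P := by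
        refine integral_congr_ae (ae_of_all _ fun ω => ?_)
        exact (sq _).trans (integral_prod_mul (X · ω) (X · ω)).symm
    _ = ∫ p, ∫ ω, F p ω ∂P ∂μ.prod μ := (integral_integral_swap hF).symm

section Kernel

variable {b C : ℝ} {g : ℝ → ℝ}

noncomputable def covKernel (b : ℝ) (g : ℝ → ℝ) (p : ℝ × ℝ) : ℝ :=
  exp (-b * (p.1 + p.2)) * ((g p.1 + g p.2 - g |p.1 - p.2|) / 2)

theorem covKernel_eq (p : ℝ × ℝ) :
    covKernel b g p = (exp (-b * p.1) * g p.1 * exp (-b * p.2) +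
      exp (-b * p.1) * (exp (-b * p.2) * g p.2) -
      exp (-b * (p.1 + p.2)) * g |p.1 - p.2|) / 2 := by
  rw [covKernel, mul_add (-b), exp_add]
  ring

theorem integrableOn_exp_neg_mul_mul (hb : 0 < b) (hg : ContinuousOn g (Ici 0))
    (hC : ∀ t, 0 ≤ t → |g t| ≤ C) : IntegrableOn (fun x => exp (-b * x) * g x) (Ioi 0) := by
  refine Integrable.mono' ((exp_neg_integrableOn_Ioi 0 hb).mul_const C) ?_ ?_
  · exact ((continuous_exp.comp (continuous_const_mul (-b))).continuousOn.mul
      (hg.mono Ioi_subset_Ici_self)).aestronglyMeasurable measurableSet_Ioi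
  · filter_upwards [ae_restrict_mem measurableSet_Ioi] with x hx
    rw [norm_mul, norm_of_nonneg (exp_pos _).le]
    exact mul_le_mul_of_nonneg_left (hC x hx.le) (exp_pos _).le

theorem integrableOn_exp_neg_mul_mul_abs_sub (hb : 0 < b) (hg : ContinuousOn g (Ici 0))
    (hC : ∀ t, 0 ≤ t → |g t| ≤ C) :
    IntegrableOn (fun p : ℝ × ℝ => exp (-b * (p.1 + p.2)) * g |p.1 - p.2|) (Ioi 0 ×ˢ Ioi 0) := by
  have hexp : IntegrableOn (fun p : ℝ × ℝ => exp (-b * p.1) * exp (-b * p.2)) (Ioi 0 ×ˢ Ioi 0) :=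
    (exp_neg_integrableOn_Ioi 0 hb).mul_prod (exp_neg_integrableOn_Ioi 0 hb)
  refine Integrable.mono' (hexp.mul_const C) ?_ (ae_of_all _ fun p => ?_)
  · have hdist : ContinuousOn (fun p : ℝ × ℝ => g |p.1 - p.2|) (Ioi 0 ×ˢ Ioi 0) :=
      hg.comp (by fun_prop : Continuous fun p : ℝ × ℝ => |p.1 - p.2|).continuousOn
        fun _ _ => mem_Ici.2 (abs_nonneg _)
    refine ContinuousOn.aestronglyMeasurable ?_ (measurableSet_Ioi.prod measurableSet_Ioi)
    exact (by fun_prop : Continuous fun p : ℝ × ℝ => exp (-b * (p.1 + p.2))).continuousOn.mul hdist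
  · rw [norm_mul, norm_of_nonneg (exp_pos _).le, mul_add, exp_add, norm_eq_abs]
    exact mul_le_mul_of_nonneg_left (hC _ (abs_nonneg _)) (by positivity)

theorem setIntegral_exp_neg_mul_mul_abs_sub (hb : 0 < b) (hg : ContinuousOn g (Ici 0))
    (hC : ∀ t, 0 ≤ t → |g t| ≤ C) :
    ∫ p in Ioi 0 ×ˢ Ioi 0, exp (-b * (p.1 + p.2)) * g |p.1 - p.2| =
      (∫ x in Ioi 0, exp (-b * x) * g x) / b := by
  have hsplit : ∀ p ∈ Ioi (0 : ℝ) ×ˢ Ioi 0,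
      exp (-b * (p.1 + (p.1 + p.2))) * g |p.1 - (p.1 + p.2)| =
        exp (-(2 * b) * p.1) * (exp (-b * p.2) * g p.2) ∧
      exp (-b * (p.1 + p.2 + p.1)) * g |p.1 + p.2 - p.1| =
        exp (-(2 * b) * p.1) * (exp (-b * p.2) * g p.2) := by
    rintro ⟨x, y⟩ ⟨-, hy⟩
    simp only [sub_add_cancel_left, add_sub_cancel_left, abs_neg, abs_of_pos (mem_Ioi.1 hy)]
    rw [show -b * (x + (x + y)) = -(2 * b) * x + -b * y by ring,
      show -b * (x + y + x) = -(2 * b) * x + -b * y by ring, exp_add]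
    constructor <;> ring
  have hQ : MeasurableSet (Ioi (0 : ℝ) ×ˢ Ioi (0 : ℝ)) := measurableSet_Ioi.prod measurableSet_Ioi
  rw [setIntegral_Ioi_prod_Ioi_eq_shear (integrableOn_exp_neg_mul_mul_abs_sub hb hg hC),
    setIntegral_congr_fun hQ fun p hp => (hsplit p hp).1,
    setIntegral_congr_fun hQ fun p hp => (hsplit p hp).2, Measure.volume_eq_prod,
    setIntegral_prod_mul (fun x => exp (-(2 * b) * x)) (fun y => exp (-b * y) * g y),
    integral_exp_neg_mul_Ioi_zero (by positivity)]
  field_simp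
  ring

theorem integrableOn_covKernel (hb : 0 < b) (hg : ContinuousOn g (Ici 0))
    (hC : ∀ t, 0 ≤ t → |g t| ≤ C) : IntegrableOn (covKernel b g) (Ioi 0 ×ˢ Ioi 0) := by
  have hu := exp_neg_integrableOn_Ioi 0 hb
  have hw := integrableOn_exp_neg_mul_mul hb hg hC
  rw [show covKernel b g = _ from funext covKernel_eq]
  exact (((hw.mul_prod hu).add (hu.mul_prod hw)).sub
    (integrableOn_exp_neg_mul_mul_abs_sub hb hg hC)).div_const 2

theorem setIntegral_covKernel (hb : 0 < b) (hg : ContinuousOn g (Ici 0))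
    (hC : ∀ t, 0 ≤ t → |g t| ≤ C) :
    ∫ p in Ioi 0 ×ˢ Ioi 0, covKernel b g p = (∫ x in Ioi 0, exp (-b * x) * g x) / (2 * b) := by
  have hu := exp_neg_integrableOn_Ioi 0 hb
  have hw := integrableOn_exp_neg_mul_mul hb hg hC
  have hwu : IntegrableOn (fun p : ℝ × ℝ => exp (-b * p.1) * g p.1 * exp (-b * p.2))
      (Ioi 0 ×ˢ Ioi 0) := hw.mul_prod hu
  have huw : IntegrableOn (fun p : ℝ × ℝ => exp (-b * p.1) * (exp (-b * p.2) * g p.2))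
      (Ioi 0 ×ˢ Ioi 0) := hu.mul_prod hw
  simp_rw [covKernel_eq]
  rw [integral_div, integral_sub (hwu.fun_add huw) (integrableOn_exp_neg_mul_mul_abs_sub hb hg hC),
    integral_add hwu huw,
    setIntegral_exp_neg_mul_mul_abs_sub hb hg hC, Measure.volume_eq_prod,
    setIntegral_prod_mul (fun x => exp (-b * x) * g x) (fun y => exp (-b * y)),
    setIntegral_prod_mul (fun x => exp (-b * x)) (fun y => exp (-b * y) * g y),
    integral_exp_neg_mul_Ioi_zero hb]
  field_simp
  ring

end Kernel

/-- Covariance of a process with increment variance `E[(B t - B s)²] = g |t - s|`. -/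
def HasIncrementCovariance {Ω : Type*} [MeasurableSpace Ω] (P : Measure Ω) (B : ℝ → Ω → ℝ)
    (g : ℝ → ℝ) : Prop :=
  ∀ s, 0 ≤ s → ∀ t, 0 ≤ t → ∫ ω, B s ω * B t ω ∂P = (g t + g s - g |t - s|) / 2

namespace HasIncrementCovariance

variable {Ω : Type*} [MeasurableSpace Ω] {P : Measure Ω} {B : ℝ → Ω → ℝ} {g : ℝ → ℝ} {s t : ℝ}

theorem integral_sq (h : HasIncrementCovariance P B g) (hg0 : g 0 = 0) (ht : 0 ≤ t) :
    ∫ ω, B t ω ^ 2 ∂P = g t := by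
  simp_rw [sq]
  rw [h t ht t ht, sub_self, abs_zero, hg0]
  ring

theorem memLp_two_of_ne_zero (h : HasIncrementCovariance P B g) (hg0 : g 0 = 0)
    (hB : AEStronglyMeasurable (B t) P) (ht : 0 ≤ t) (hgt : g t ≠ 0) : MemLp (B t) 2 P := by
  refine (memLp_two_iff_integrable_sq hB).2 (by_contra fun hni => hgt ?_)
  rw [← h.integral_sq hg0 ht, integral_undef hni]

theorem integral_sub_sq (h : HasIncrementCovariance P B g) (hg0 : g 0 = 0) (hs : 0 ≤ s)
    (ht : 0 ≤ t) (hBs : MemLp (B s) 2 P) (hBt : MemLp (B t) 2 P) :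
    ∫ ω, (B t ω - B s ω) ^ 2 ∂P = g |t - s| := by
  have hts : Integrable (fun ω => B t ω * B s ω) P := hBt.integrable_mul hBs
  have hexpand : (fun ω => (B t ω - B s ω) ^ 2) =
      fun ω => B t ω ^ 2 + B s ω ^ 2 - 2 * (B t ω * B s ω) := by
    ext; ring
  rw [hexpand, integral_sub (hBt.integrable_sq.fun_add hBs.integrable_sq) (hts.const_mul 2),
    integral_add hBt.integrable_sq hBs.integrable_sq, integral_const_mul, h.integral_sq hg0 ht,
    h.integral_sq hg0 hs, h t ht s hs, abs_sub_comm]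
  ring

theorem ne_zero_of_tendsto (h : HasIncrementCovariance P B g)
    (hB : ∀ t, AEStronglyMeasurable (B t) P) (hg0 : g 0 = 0) {α : ℝ}
    (hlim : Tendsto g atTop (nhds α)) (hα : α ≠ 0) {δ : ℝ} (hδ : 0 < δ) :
    g δ ≠ 0 := by
  intro hgδ
  obtain ⟨T, hT⟩ := eventually_atTop.1 (hlim.eventually (eventually_ne_nhds hα))
  obtain ⟨T₀, hT₀, hT₀0⟩ : ∃ T₀, T ≤ T₀ ∧ 0 ≤ T₀ := ⟨max T 0, le_max_left _ _, le_max_right _ _⟩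
  have hL2 : ∀ t, T₀ ≤ t → MemLp (B t) 2 P := fun t ht =>
    h.memLp_two_of_ne_zero hg0 (hB t) (hT₀0.trans ht) (hT t (hT₀.trans ht))
  have hstep : ∀ t, T₀ ≤ t → B (t + δ) =ᵐ[P] B t := by
    intro t ht
    have ht0 : 0 ≤ t := hT₀0.trans ht
    have hzero : ∫ ω, (B (t + δ) ω - B t ω) ^ 2 ∂P = 0 := by
      rw [h.integral_sub_sq hg0 ht0 (by linarith) (hL2 t ht) (hL2 _ (by linarith)),
        add_sub_cancel_left, abs_of_pos hδ, hgδ]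
    filter_upwards [(integral_eq_zero_iff_of_nonneg (fun _ => sq_nonneg _)
      (((hL2 _ (by linarith)).sub (hL2 t ht)).integrable_sq)).1 hzero] with ω hω
    exact sub_eq_zero.1 (pow_eq_zero_iff two_ne_zero |>.1 hω)
  have hchain : ∀ n : ℕ, B (T₀ + n * δ) =ᵐ[P] B T₀ := by
    intro n
    induction n with
    | zero => simp
    | succ n ih =>
      rw [Nat.cast_succ, add_one_mul, ← add_assoc]
      exact (hstep _ (le_add_of_nonneg_right (by positivity))).trans ih
  have hgnδ : ∀ n : ℕ, g (n * δ) = 0 := by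
    intro n
    have hn : 0 ≤ (n : ℝ) * δ := by positivity
    rw [← abs_of_nonneg hn, ← add_sub_cancel_left T₀ (n * δ),
      ← h.integral_sub_sq hg0 hT₀0 (by positivity) (hL2 T₀ le_rfl)
        (hL2 _ (le_add_of_nonneg_right hn))]
    refine integral_eq_zero_of_ae ?_
    filter_upwards [hchain n] with ω hω
    simp [hω]
  have hα0 : Tendsto (fun n : ℕ => g (n * δ)) atTop (nhds α) :=
    hlim.comp (tendsto_natCast_atTop_atTop.atTop_mul_const hδ)
  simp only [hgnδ] at hα0
  exact hα (tendsto_nhds_unique hα0 tendsto_const_nhds)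

end HasIncrementCovariance

theorem HasIncrementCovariance.integral_sq_intervalIntegral_exp_mul {Ω : Type*}
    [MeasurableSpace Ω] {P : Measure Ω} [SFinite P] {B : ℝ → Ω → ℝ} {g : ℝ → ℝ} {b C T : ℝ}
    (h : HasIncrementCovariance P B g) (hg0 : g 0 = 0) (hB : Measurable (Function.uncurry B))
    (hL2 : ∀ t, 0 < t → MemLp (B t) 2 P) (hC : ∀ t, 0 ≤ t → |g t| ≤ C) (hb : 0 ≤ b)
    (hT : 0 ≤ T) :
    ∫ ω, (∫ t in 0..T, exp (-b * t) * B t ω) ^ 2 ∂P =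
      ∫ p in Ioc 0 T ×ˢ Ioc 0 T, covKernel b g p := by
  have hpos : ∀ᵐ t ∂volume.restrict (Ioc 0 T), 0 < t :=
    ae_restrict_of_forall_mem measurableSet_Ioc fun t ht => ht.1
  have hX : Measurable (Function.uncurry fun t ω => exp (-b * t) * B t ω) :=
    (measurable_exp.comp (measurable_const.mul measurable_fst)).mul hB
  have hX2 : ∀ᵐ t ∂volume.restrict (Ioc 0 T), ∫ ω, (exp (-b * t) * B t ω) ^ 2 ∂P ≤ C := by
    filter_upwards [hpos] with t ht
    simp_rw [mul_pow]
    rw [integral_const_mul, h.integral_sq hg0 ht.le]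
    refine (le_abs_self _).trans ?_
    rw [abs_mul, abs_of_nonneg (by positivity)]
    exact (mul_le_of_le_one_left (abs_nonneg _) (pow_le_one₀ (exp_pos _).le
      (exp_le_one_iff.2 (by nlinarith)))).trans (hC t ht.le)
  simp_rw [intervalIntegral.integral_of_le hT]
  rw [integral_sq_integral_eq_integral_prod hX (hpos.mono fun t ht => (hL2 t ht).const_mul _) hX2,
    Measure.prod_restrict, ← Measure.volume_eq_prod]
  refine setIntegral_congr_fun (measurableSet_Ioc.prod measurableSet_Ioc) fun p hp => ?_
  simp only [mul_mul_mul_comm _ (B p.1 _)]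
  rw [integral_const_mul, h p.1 hp.1.1.le p.2 hp.2.1.le, covKernel, mul_add, exp_add,
    abs_sub_comm, add_comm (g p.2)]

theorem var_Z_limit_general
    {Ω : Type*} [MeasurableSpace Ω] (P : Measure Ω) [IsProbabilityMeasure P]
    (b α2 β2 : ℝ) (hb : 0 < b) (hα2 : 0 < α2)
    (g : ℝ → ℝ)
    (hg_cont : ContinuousOn g (Set.Ici 0))
    (hg_bdd : ∃ C, ∀ t, 0 ≤ t → |g t| ≤ C)
    (hg_zero : g 0 = 0)
    (hg_lim : Tendsto g atTop (nhds α2))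
    (hβ2 : β2 = b / 2 * ∫ u in Set.Ioi (0:ℝ), Real.exp (-b * u) * g u)
    (B : ℝ → Ω → ℝ)
    (hB_meas : Measurable fun p : ℝ × Ω => B p.1 p.2)
    (hB_cov : ∀ s, 0 ≤ s → ∀ t, 0 ≤ t →
      ∫ ω, B s ω * B t ω ∂P = (g t + g s - g |t - s|) / 2)
    (Z : ℝ → Ω → ℝ)
    (hZ : ∀ T ω, Z T ω = ∫ t in (0:ℝ)..T, Real.exp (-b * t) * B t ω)
    :
    Tendsto (fun T => ∫ ω, (Z T ω) ^ 2 ∂P) atTop (nhds (β2 / b ^ 2)) ∧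
    (∫ t in Set.Ioi (0:ℝ), ∫ s in Set.Ioi (0:ℝ),
        Real.exp (-b * (t + s)) * ((g t + g s - g |t - s|) / 2)) = β2 / b ^ 2 := by
  obtain ⟨C, hC⟩ := hg_bdd
  have hcov : HasIncrementCovariance P B g := hB_cov
  have hBt : ∀ t, AEStronglyMeasurable (B t) P := fun t =>
    (hB_meas.comp measurable_prodMk_left).aestronglyMeasurable
  have hL2 : ∀ t, 0 < t → MemLp (B t) 2 P := fun t ht =>
    hcov.memLp_two_of_ne_zero hg_zero (hBt t) ht.le
      (hcov.ne_zero_of_tendsto hBt hg_zero hg_lim hα2.ne' ht)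
  have hK := integrableOn_covKernel hb hg_cont hC
  have hvalue : ∫ p in Ioi 0 ×ˢ Ioi 0, covKernel b g p = β2 / b ^ 2 := by
    rw [setIntegral_covKernel hb hg_cont hC, hβ2]
    field_simp
  refine ⟨hvalue ▸ (tendsto_setIntegral_Ioc_prod_Ioc hK).congr' ?_, ?_⟩
  · filter_upwards [eventually_ge_atTop 0] with T hT
    simp_rw [hZ]
    exact (hcov.integral_sq_intervalIntegral_exp_mul hg_zero hB_meas hL2 hC hb.le hT).symm
  · rw [← hvalue, Measure.volume_eq_prod, setIntegral_prod _ hK]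
    rfl

theorem var_Z_limit
    {Ω : Type*} [MeasurableSpace Ω] (P : Measure Ω) [IsProbabilityMeasure P]
    (b α2 β2 : ℝ) (hb : 0 < b) (hα2 : 0 < α2)
    (g : ℝ → ℝ)
    (hg_cont : ContinuousOn g (Set.Ici 0))
    (hg_bdd : ∃ C, ∀ t, 0 ≤ t → |g t| ≤ C)
    (hg_nonneg : ∀ t, 0 ≤ t → 0 ≤ g t)
    (hg_zero : g 0 = 0)
    (hg_lim : Tendsto g atTop (nhds α2))
    (hβ2 : β2 = b / 2 * ∫ u in Set.Ioi (0:ℝ), Real.exp (-b * u) * g u)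
    (B : ℝ → Ω → ℝ)
    (hB_meas : Measurable fun p : ℝ × Ω => B p.1 p.2)
    (hB_cont : ∀ᵐ ω ∂P, Continuous fun t => B t ω)
    (hB_zero : ∀ ω, B 0 ω = 0)
    (hB_mean : ∀ t, 0 ≤ t → ∫ ω, B t ω ∂P = 0)
    (hB_cov : ∀ s, 0 ≤ s → ∀ t, 0 ≤ t →
      ∫ ω, B s ω * B t ω ∂P = (g t + g s - g |t - s|) / 2)
    (Z : ℝ → Ω → ℝ)
    (hZ : ∀ T ω, Z T ω = ∫ t in (0:ℝ)..T, Real.exp (-b * t) * B t ω)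
    :
    Tendsto (fun T => ∫ ω, (Z T ω) ^ 2 ∂P) atTop (nhds (β2 / b ^ 2)) ∧
    (∫ t in Set.Ioi (0:ℝ), ∫ s in Set.Ioi (0:ℝ),
        Real.exp (-b * (t + s)) * ((g t + g s - g |t - s|) / 2)) = β2 / b ^ 2 :=
  var_Z_limit_general P b α2 β2 hb hα2 g hg_cont hg_bdd hg_zero hg_lim hβ2 B hB_meas hB_cov Z hZ
end

section
/- lim_{T → ∞} E[Z_T B_T] = β²/b. -/
/-!
Fubini turns `E[Z_T B_T]` into `∫₀ᵀ e^{-bt} (g T + g t - g (T - t)) / 2 dt`, and dominated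
convergence sends this to `∫₀^∞ e^{-bt} g t / 2 dt = β² / b`, because `g T` and `g (T - t)` both
tend to `α²`.

Fubini needs `B t` to be square integrable, which the covariance identity only gives where
`g t ≠ 0` (elsewhere `∫ B t ^ 2` might be the junk value `0` of a non-integrable function). So we
show that `g` has no zero in `(0, ∞)`: at its last zero `t₁ > 0`, Fatou's lemma along `t ↓ t₁`
forces `B t₁ = 0` a.s., and then the covariance identity makes `g` `t₁`-periodic on `[0, ∞)`,
contradicting `g 0 = 0 ≠ α² = lim g`.
-/

open MeasureTheory Filter Set Topology

lemma abs_mul_le_half_add_sq (x y : ℝ) : |x * y| ≤ (x ^ 2 + y ^ 2) / 2 := by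
  have h := two_mul_le_add_sq |x| |y|
  rw [sq_abs, sq_abs] at h
  rw [abs_mul]
  linarith

lemma eq_of_tendsto_of_add_period {g : ℝ → ℝ} {p L : ℝ} (hp : 0 < p)
    (hper : ∀ v, 0 ≤ v → g (v + p) = g v) (hlim : Tendsto g atTop (𝓝 L)) : L = g 0 := by
  have hmul : ∀ n : ℕ, g (n * p) = g 0 := by
    intro n
    induction n with
    | zero => simp
    | succ k ih => rw [Nat.cast_succ, add_one_mul, hper _ (by positivity), ih]
  have h := hlim.comp (tendsto_natCast_atTop_atTop.atTop_mul_const hp)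
  rw [show g ∘ (fun n : ℕ => (n : ℝ) * p) = fun _ => g 0 from funext hmul] at h
  exact tendsto_nhds_unique h tendsto_const_nhds

theorem tendsto_setIntegral_Ioc_of_dominated {μ : Measure ℝ} {F : ℝ → ℝ → ℝ} {f bound : ℝ → ℝ}
    {a : ℝ} (hF_meas : ∀ T, AEStronglyMeasurable (F T) (μ.restrict (Ioc a T)))
    (h_bound : ∀ T, ∀ t ∈ Ioc a T, ‖F T t‖ ≤ bound t)
    (bound_integrable : IntegrableOn bound (Ioi a) μ)
    (h_lim : ∀ t ∈ Ioi a, Tendsto (fun T => F T t) atTop (𝓝 (f t))) :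
    Tendsto (fun T => ∫ t in Ioc a T, F T t ∂μ) atTop (𝓝 (∫ t in Ioi a, f t ∂μ)) := by
  have hIoc : ∀ T, ∫ t in Ioc a T, F T t ∂μ = ∫ t in Ioi a, (Ioc a T).indicator (F T) t ∂μ := by
    intro T
    rw [integral_indicator measurableSet_Ioc, Measure.restrict_restrict measurableSet_Ioc,
      inter_eq_self_of_subset_left Ioc_subset_Ioi_self]
  simp only [hIoc]
  refine tendsto_integral_filter_of_dominated_convergence bound
    (Eventually.of_forall fun T =>
      ((aestronglyMeasurable_indicator_iff measurableSet_Ioc).2 (hF_meas T)).restrict)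
    (Eventually.of_forall fun T => ?_) bound_integrable ?_
  · filter_upwards [ae_restrict_mem measurableSet_Ioi] with t ht
    by_cases htT : t ∈ Ioc a T
    · rw [indicator_of_mem htT]
      exact h_bound T t htT
    · rw [indicator_of_notMem htT, norm_zero]
      exact (norm_nonneg _).trans (h_bound t t (right_mem_Ioc.2 ht))
  · filter_upwards [ae_restrict_mem measurableSet_Ioi] with t ht
    refine (h_lim t ht).congr' ?_
    filter_upwards [eventually_ge_atTop t] with T hT
    rw [indicator_of_mem (mem_Ioc.2 ⟨ht, hT⟩)]

theorem tendsto_setIntegral_exp_mul_covariance {b L C : ℝ} {g : ℝ → ℝ} (hb : 0 < b)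
    (hg_cont : ContinuousOn g (Ici 0)) (hC : ∀ t, 0 ≤ t → |g t| ≤ C)
    (hg_lim : Tendsto g atTop (𝓝 L)) :
    Tendsto (fun T => ∫ t in Ioc 0 T, Real.exp (-b * t) * ((g T + g t - g (T - t)) / 2))
      atTop (𝓝 (∫ t in Ioi 0, Real.exp (-b * t) * (g t / 2))) := by
  refine tendsto_setIntegral_Ioc_of_dominated (bound := fun t => 3 * C / 2 * Real.exp (-b * t))
    (fun T => ?_) (fun T t ht => ?_) ((exp_neg_integrableOn_Ioi 0 hb).const_mul _)
    (fun t ht => ?_)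
  · refine ContinuousOn.aestronglyMeasurable ?_ measurableSet_Ioc
    have hsub : MapsTo (fun t => T - t) (Ioc 0 T) (Ici 0) := fun t ht => sub_nonneg.2 ht.2
    exact (Real.continuous_exp.comp (continuous_const_mul (-b))).continuousOn.mul
      (((continuousOn_const.add (hg_cont.mono fun t ht => le_of_lt ht.1)).sub
        (hg_cont.comp (continuousOn_const.sub continuousOn_id) hsub)).div_const 2)
  · have hT := abs_le.1 (hC T (ht.1.le.trans ht.2))
    have ht' := abs_le.1 (hC t ht.1.le)
    have hTt := abs_le.1 (hC (T - t) (sub_nonneg.2 ht.2))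
    rw [norm_mul, Real.norm_of_nonneg (Real.exp_pos _).le, mul_comm]
    gcongr
    rw [Real.norm_eq_abs, abs_le]
    constructor <;> linarith
  · have hshift : Tendsto (fun T => T - t) atTop atTop := by
      simpa only [id_eq, sub_eq_add_neg] using
        tendsto_atTop_add_const_right atTop (-t) tendsto_id
    have hlimT : Tendsto (fun T => (g T + g t - g (T - t)) / 2) atTop
        (𝓝 ((L + g t - L) / 2)) :=
      ((hg_lim.add_const (g t)).sub (hg_lim.comp hshift)).div_const 2
    rw [add_sub_cancel_left] at hlimT
    exact hlimT.const_mul _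

section

variable {Ω : Type*} [MeasurableSpace Ω] {P : Measure Ω} {g : ℝ → ℝ} {B : ℝ → Ω → ℝ}

lemma integrable_mul_of_integrable_sq {f h : Ω → ℝ} (hf : AEStronglyMeasurable f P)
    (hh : AEStronglyMeasurable h P) (hf2 : Integrable (fun ω => f ω ^ 2) P)
    (hh2 : Integrable (fun ω => h ω ^ 2) P) : Integrable (fun ω => f ω * h ω) P :=
  ((hf2.add hh2).div_const 2).mono' (hf.mul hh)
    (ae_of_all _ fun ω => abs_mul_le_half_add_sq (f ω) (h ω))

lemma integral_abs_mul_le_of_integrable_sq {f h : Ω → ℝ}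
    (hf2 : Integrable (fun ω => f ω ^ 2) P) (hh2 : Integrable (fun ω => h ω ^ 2) P) :
    ∫ ω, |f ω * h ω| ∂P ≤ (∫ ω, f ω ^ 2 ∂P + ∫ ω, h ω ^ 2 ∂P) / 2 := by
  rw [← integral_add hf2 hh2, ← integral_div]
  exact integral_mono_of_nonneg (ae_of_all _ fun ω => abs_nonneg _) ((hf2.add hh2).div_const 2)
    (ae_of_all _ fun ω => abs_mul_le_half_add_sq (f ω) (h ω))

theorem integral_integral_mul_swap_of_integral_sq_le {ι : Type*} [MeasurableSpace ι]
    {μ : Measure ι} [SFinite μ] [SFinite P] {B : ι → Ω → ℝ} {X : Ω → ℝ} {w : ι → ℝ} {C : ℝ}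
    (hB : Measurable (Function.uncurry B)) (hX : AEStronglyMeasurable X P) (hw : Integrable w μ)
    (hX2 : Integrable (fun ω => X ω ^ 2) P)
    (hB2 : ∀ᵐ t ∂μ, Integrable (fun ω => B t ω ^ 2) P)
    (hC : ∀ᵐ t ∂μ, ∫ ω, B t ω ^ 2 ∂P ≤ C) :
    ∫ ω, (∫ t, w t * B t ω ∂μ) * X ω ∂P = ∫ t, w t * ∫ ω, B t ω * X ω ∂P ∂μ := by
  have hBt : ∀ t, Measurable (B t) := fun t => hB.comp measurable_prodMk_left
  have hint : Integrable (Function.uncurry fun t ω => w t * (B t ω * X ω)) (μ.prod P) := by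
    have hmeas : AEStronglyMeasurable (Function.uncurry fun t ω => w t * (B t ω * X ω))
        (μ.prod P) :=
      hw.aestronglyMeasurable.comp_fst.mul
        (hB.aestronglyMeasurable.mul hX.comp_snd)
    refine (integrable_prod_iff hmeas).2 ⟨?_, ?_⟩
    · filter_upwards [hB2] with t ht
      exact (integrable_mul_of_integrable_sq (hBt t).aestronglyMeasurable
        hX ht hX2).const_mul (w t)
    · refine (hw.norm.mul_const ((C + ∫ ω, X ω ^ 2 ∂P) / 2)).mono'
        hmeas.norm.integral_prod_right' ?_
      filter_upwards [hB2, hC] with t ht htC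
      rw [Real.norm_of_nonneg (integral_nonneg fun ω => norm_nonneg _)]
      simp only [Function.uncurry_apply_pair, norm_mul (w t), integral_const_mul]
      gcongr
      calc ∫ ω, ‖B t ω * X ω‖ ∂P ≤ (∫ ω, B t ω ^ 2 ∂P + ∫ ω, X ω ^ 2 ∂P) / 2 :=
            integral_abs_mul_le_of_integrable_sq ht hX2
        _ ≤ (C + ∫ ω, X ω ^ 2 ∂P) / 2 := by gcongr
  calc ∫ ω, (∫ t, w t * B t ω ∂μ) * X ω ∂P
      = ∫ ω, ∫ t, w t * (B t ω * X ω) ∂μ ∂P := by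
        simp only [← integral_mul_const, mul_assoc]
    _ = ∫ t, w t * ∫ ω, B t ω * X ω ∂P ∂μ := by
        simp only [(integral_integral_swap hint).symm, integral_const_mul]

lemma ae_eq_zero_of_tendsto_integral_sq {X : ℕ → Ω → ℝ} {Y : Ω → ℝ}
    (hX : ∀ n, AEMeasurable (X n) P) (hX2 : ∀ n, Integrable (fun ω => X n ω ^ 2) P)
    (hlim : ∀ᵐ ω ∂P, Tendsto (fun n => X n ω) atTop (𝓝 (Y ω)))
    (h0 : Tendsto (fun n => ∫ ω, X n ω ^ 2 ∂P) atTop (𝓝 0)) : Y =ᵐ[P] 0 := by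
  have hY : AEMeasurable Y P := aemeasurable_of_tendsto_metrizable_ae' hX hlim
  have hzero : ∫⁻ ω, ENNReal.ofReal (Y ω ^ 2) ∂P = 0 := by
    refine le_antisymm ?_ zero_le
    calc ∫⁻ ω, ENNReal.ofReal (Y ω ^ 2) ∂P
        = ∫⁻ ω, liminf (fun n => ENNReal.ofReal (X n ω ^ 2)) atTop ∂P := by
          refine lintegral_congr_ae ?_
          filter_upwards [hlim] with ω hω
          exact ((ENNReal.continuous_ofReal.tendsto _).comp (hω.pow 2)).liminf_eq.symm
      _ ≤ liminf (fun n => ∫⁻ ω, ENNReal.ofReal (X n ω ^ 2) ∂P) atTop :=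
          lintegral_liminf_le' fun n => ((hX n).pow_const 2).ennreal_ofReal
      _ = liminf (fun n => ENNReal.ofReal (∫ ω, X n ω ^ 2 ∂P)) atTop := by
          simp only [ofReal_integral_eq_lintegral_ofReal (hX2 _)
            (ae_of_all _ fun ω => sq_nonneg _)]
      _ = 0 :=
          ((ENNReal.continuous_ofReal.tendsto 0).comp h0).liminf_eq.trans ENNReal.ofReal_zero
  filter_upwards [(lintegral_eq_zero_iff' (hY.pow_const 2).ennreal_ofReal).1 hzero] with ω hω
  simpa using hω

lemma integral_sq_eq_of_covariance (hg_zero : g 0 = 0)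
    (hB_cov : ∀ s, 0 ≤ s → ∀ t, 0 ≤ t → ∫ ω, B s ω * B t ω ∂P = (g t + g s - g |t - s|) / 2)
    {t : ℝ} (ht : 0 ≤ t) : ∫ ω, B t ω ^ 2 ∂P = g t := by
  simp only [sq, hB_cov t ht t ht, sub_self, abs_zero, hg_zero]
  ring

lemma ae_eq_zero_of_integral_sq_eq_zero {t₀ : ℝ} (hB : ∀ t, AEMeasurable (B t) P)
    (hB_cont : ∀ᵐ ω ∂P, Continuous fun t => B t ω)
    (hvar : ∀ t, t₀ ≤ t → ∫ ω, B t ω ^ 2 ∂P = g t) (hg_cont : ContinuousWithinAt g (Ioi t₀) t₀)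
    (hg₀ : g t₀ = 0) (hg_ne : ∀ t, t₀ < t → g t ≠ 0) : B t₀ =ᵐ[P] 0 := by
  set s : ℕ → ℝ := fun n => t₀ + 1 / (n + 1)
  have hs_gt : ∀ n, t₀ < s n := fun n => lt_add_of_pos_right t₀ (by positivity)
  have hs : Tendsto s atTop (𝓝[>] t₀) := by
    refine tendsto_nhdsWithin_iff.2 ⟨?_, Eventually.of_forall hs_gt⟩
    simpa [s] using tendsto_one_div_add_atTop_nhds_zero_nat.const_add t₀
  refine ae_eq_zero_of_tendsto_integral_sq (fun n => hB (s n)) (fun n => ?_) ?_ ?_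
  · exact Integrable.of_integral_ne_zero (by rw [hvar _ (hs_gt n).le]; exact hg_ne _ (hs_gt n))
  · filter_upwards [hB_cont] with ω hω
    exact (hω.tendsto t₀).comp (tendsto_nhds_of_tendsto_nhdsWithin hs)
  · rw [← hg₀]
    refine (hg_cont.tendsto.comp hs).congr fun n => ?_
    exact (hvar _ (hs_gt n).le).symm

theorem ne_zero_of_pos_of_covariance {L : ℝ} (hg_cont : ContinuousOn g (Ici 0))
    (hg_zero : g 0 = 0) (hg_lim : Tendsto g atTop (𝓝 L)) (hL : L ≠ 0)
    (hB : ∀ t, AEMeasurable (B t) P) (hB_cont : ∀ᵐ ω ∂P, Continuous fun t => B t ω)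
    (hB_cov : ∀ s, 0 ≤ s → ∀ t, 0 ≤ t → ∫ ω, B s ω * B t ω ∂P = (g t + g s - g |t - s|) / 2)
    {t : ℝ} (ht : 0 < t) : g t ≠ 0 := by
  set S := Ici 0 ∩ g ⁻¹' {0}
  have hS0 : (0 : ℝ) ∈ S := ⟨self_mem_Ici, hg_zero⟩
  obtain ⟨N, hN⟩ := eventually_atTop.1 (hg_lim.eventually_ne hL)
  have hS_bdd : BddAbove S := ⟨N, fun u hu => not_lt.1 fun h => hN u h.le hu.2⟩
  set t₁ := sSup S
  have ht₁ : t₁ ∈ S :=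
    (hg_cont.preimage_isClosed_of_isClosed isClosed_Ici isClosed_singleton).csSup_mem
      ⟨0, hS0⟩ hS_bdd
  have hright : ∀ u, t₁ < u → g u ≠ 0 := fun u hu hgu =>
    (le_csSup hS_bdd ⟨ht₁.1.trans hu.le, hgu⟩).not_gt hu
  suffices t₁ ≤ 0 from hright t (by linarith)
  by_contra! ht₁_pos
  have hB₁ : B t₁ =ᵐ[P] 0 :=
    ae_eq_zero_of_integral_sq_eq_zero hB hB_cont
      (fun u hu => integral_sq_eq_of_covariance hg_zero hB_cov (ht₁.1.trans hu))
      ((hg_cont t₁ ht₁.1).mono fun u (hu : t₁ < u) => mem_Ici.2 (ht₁.1.trans hu.le)) ht₁.2 hright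
  have hper : ∀ v, 0 ≤ v → g (v + t₁) = g v := by
    intro v hv
    have hcov := hB_cov t₁ ht₁.1 (v + t₁) (by linarith)
    rw [integral_eq_zero_of_ae (hB₁.mono fun ω hω => by simp [hω]), ht₁.2,
      add_sub_cancel_right, abs_of_nonneg hv] at hcov
    linarith
  exact hL (hg_zero ▸ eq_of_tendsto_of_add_period ht₁_pos hper hg_lim)

end

theorem cov_ZB_limit_general
    {Ω : Type*} [MeasurableSpace Ω] (P : Measure Ω) [IsProbabilityMeasure P]
    (b α2 β2 : ℝ) (hb : 0 < b) (hα2 : 0 < α2)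
    (g : ℝ → ℝ)
    (hg_cont : ContinuousOn g (Set.Ici 0))
    (hg_bdd : ∃ C, ∀ t, 0 ≤ t → |g t| ≤ C)
    (hg_zero : g 0 = 0)
    (hg_lim : Tendsto g atTop (nhds α2))
    (hβ2 : β2 = b / 2 * ∫ u in Set.Ioi (0:ℝ), Real.exp (-b * u) * g u)
    (B : ℝ → Ω → ℝ)
    (hB_meas : Measurable fun p : ℝ × Ω => B p.1 p.2)
    (hB_cont : ∀ᵐ ω ∂P, Continuous fun t => B t ω)
    (hB_cov : ∀ s, 0 ≤ s → ∀ t, 0 ≤ t →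
      ∫ ω, B s ω * B t ω ∂P = (g t + g s - g |t - s|) / 2)
    (Z : ℝ → Ω → ℝ)
    (hZ : ∀ T ω, Z T ω = ∫ t in (0:ℝ)..T, Real.exp (-b * t) * B t ω)
    :
    Tendsto (fun T => ∫ ω, Z T ω * B T ω ∂P) atTop (nhds (β2 / b)) := by
  obtain ⟨C, hC⟩ := hg_bdd
  have hBt : ∀ t, Measurable (B t) := fun t => hB_meas.comp measurable_prodMk_left
  have hvar : ∀ t, 0 ≤ t → ∫ ω, B t ω ^ 2 ∂P = g t := fun t =>
    integral_sq_eq_of_covariance hg_zero hB_cov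
  have hsq : ∀ t, 0 < t → Integrable (fun ω => B t ω ^ 2) P := fun t ht =>
    Integrable.of_integral_ne_zero <| by
      rw [hvar t ht.le]
      exact ne_zero_of_pos_of_covariance hg_cont hg_zero hg_lim hα2.ne'
        (fun t => (hBt t).aemeasurable) hB_cont hB_cov ht
  have hmoment : ∀ T, 0 < T → ∫ ω, Z T ω * B T ω ∂P
      = ∫ t in Ioc 0 T, Real.exp (-b * t) * ((g T + g t - g (T - t)) / 2) := by
    intro T hT
    simp only [hZ, intervalIntegral.integral_of_le hT.le]
    rw [integral_integral_mul_swap_of_integral_sq_le (C := C) hB_meas (hBt T).aestronglyMeasurable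
      ((exp_neg_integrableOn_Ioi 0 hb).mono_set Ioc_subset_Ioi_self) (hsq T hT)
      ((ae_restrict_mem measurableSet_Ioc).mono fun t ht => hsq t ht.1)
      ((ae_restrict_mem measurableSet_Ioc).mono fun t ht =>
        (hvar t ht.1.le).trans_le ((le_abs_self _).trans (hC t ht.1.le)))]
    refine setIntegral_congr_fun measurableSet_Ioc fun t ht => ?_
    rw [hB_cov t ht.1.le T hT.le, abs_of_nonneg (sub_nonneg.2 ht.2)]
  have hval : ∫ t in Ioi 0, Real.exp (-b * t) * (g t / 2) = β2 / b := by
    simp only [← mul_div_assoc, integral_div, hβ2]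
    field_simp
  rw [← hval]
  refine (tendsto_setIntegral_exp_mul_covariance hb hg_cont hC hg_lim).congr' ?_
  filter_upwards [eventually_gt_atTop 0] with T hT
  exact (hmoment T hT).symm

theorem cov_ZB_limit
    {Ω : Type*} [MeasurableSpace Ω] (P : Measure Ω) [IsProbabilityMeasure P]
    (b α2 β2 : ℝ) (hb : 0 < b) (hα2 : 0 < α2)
    (g : ℝ → ℝ)
    (hg_cont : ContinuousOn g (Set.Ici 0))
    (hg_bdd : ∃ C, ∀ t, 0 ≤ t → |g t| ≤ C)
    (hg_nonneg : ∀ t, 0 ≤ t → 0 ≤ g t)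
    (hg_zero : g 0 = 0)
    (hg_lim : Tendsto g atTop (nhds α2))
    (hβ2 : β2 = b / 2 * ∫ u in Set.Ioi (0:ℝ), Real.exp (-b * u) * g u)
    (B : ℝ → Ω → ℝ)
    (hB_meas : Measurable fun p : ℝ × Ω => B p.1 p.2)
    (hB_cont : ∀ᵐ ω ∂P, Continuous fun t => B t ω)
    (hB_zero : ∀ ω, B 0 ω = 0)
    (hB_mean : ∀ t, 0 ≤ t → ∫ ω, B t ω ∂P = 0)
    (hB_cov : ∀ s, 0 ≤ s → ∀ t, 0 ≤ t →
      ∫ ω, B s ω * B t ω ∂P = (g t + g s - g |t - s|) / 2)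
    (Z : ℝ → Ω → ℝ)
    (hZ : ∀ T ω, Z T ω = ∫ t in (0:ℝ)..T, Real.exp (-b * t) * B t ω)
    :
    Tendsto (fun T => ∫ ω, Z T ω * B T ω ∂P) atTop (nhds (β2 / b)) :=
  cov_ZB_limit_general P b α2 β2 hb hα2 g hg_cont hg_bdd hg_zero hg_lim hβ2 B hB_meas hB_cont hB_cov
    Z hZ
end

section
/- lim_{T → ∞} E[B_T V_T] = β². In particular, since β² > 0, the second condition of hypothesis (A₅) of Es-Sebaiy et al. fails for this process. -/
/-!
By Fubini, `E[B_T U_T] = e^{-bT} ∫_0^T e^{bt} E[B_T B_t] dt`, and the substitution `u = T - t`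
turns `E[B_T V_T] = g T - b E[B_T U_T]` into
`g T - b ∫_0^T e^{-bu} (g (T - u) + g T - g u) / 2 du`. By dominated convergence this tends to
`α² - b ∫_0^∞ e^{-bu} (2α² - g u) / 2 du = β²`.

The delicate point is integrability: the integral of a non-integrable function is `0`, so
`E[B_t²] = g t` gives square integrability of `B_t` only where `g t ≠ 0`. We show `g > 0` on
`(0, ∞)`: at the largest `c > 0` with `g c ≤ 0`, Fatou's lemma along `c + 1/(n+1)` and path
continuity give `B_c = 0` a.s., and then the covariance of `B_{2c}` and `B_c` forces `g (2c) = 0`.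
-/

open MeasureTheory Filter Set Real Topology

theorem exp_neg_mul_intervalIntegral_exp_mul (b T : ℝ) (h : ℝ → ℝ) :
    exp (-b * T) * ∫ t in 0..T, exp (b * t) * h t = ∫ u in 0..T, exp (-b * u) * h (T - u) := by
  rw [← intervalIntegral.integral_const_mul]
  have h_sub := intervalIntegral.integral_comp_sub_left
    (fun t => exp (-b * T) * (exp (b * t) * h t)) (a := 0) (b := T) T
  rw [sub_self, sub_zero] at h_sub
  rw [← h_sub]
  refine intervalIntegral.integral_congr fun u _ => ?_
  simp only [← mul_assoc, ← exp_add]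
  ring_nf

theorem intervalIntegral_tendsto_integral_Ioi_of_dominated {E : Type*} [NormedAddCommGroup E]
    [NormedSpace ℝ E] {a : ℝ} {F : ℝ → ℝ → E} {f : ℝ → E} {bound : ℝ → ℝ}
    (hF_meas : ∀ T, AEStronglyMeasurable (F T) (volume.restrict (Ioc a T)))
    (h_bound : ∀ T, ∀ u ∈ Ioc a T, ‖F T u‖ ≤ bound u) (bound_int : IntegrableOn bound (Ioi a))
    (h_lim : ∀ u, a < u → Tendsto (fun T => F T u) atTop (𝓝 (f u))) :
    Tendsto (fun T => ∫ u in a..T, F T u) atTop (𝓝 (∫ u in Ioi a, f u)) := by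
  have h_eq : ∀ T, a ≤ T → ∫ u in Ioi a, (Ioc a T).indicator (F T) u = ∫ u in a..T, F T u :=
    fun T hT => by
      rw [setIntegral_indicator measurableSet_Ioc,
        inter_eq_self_of_subset_right Ioc_subset_Ioi_self, intervalIntegral.integral_of_le hT]
  refine Tendsto.congr' ((eventually_ge_atTop a).mono h_eq) ?_
  refine tendsto_integral_filter_of_dominated_convergence bound
    (Eventually.of_forall fun T => ?_) (Eventually.of_forall fun T => ?_) bound_int ?_
  · rw [aestronglyMeasurable_indicator_iff measurableSet_Ioc, Measure.restrict_restrict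
      measurableSet_Ioc, inter_eq_self_of_subset_left Ioc_subset_Ioi_self]
    exact hF_meas T
  · filter_upwards [ae_restrict_mem measurableSet_Ioi] with u hu
    by_cases h : u ∈ Ioc a T
    · rw [indicator_of_mem h]
      exact h_bound T u h
    · rw [indicator_of_notMem h, norm_zero]
      exact (norm_nonneg _).trans (h_bound u u (mem_Ioc.2 ⟨hu, le_rfl⟩))
  · filter_upwards [ae_restrict_mem measurableSet_Ioi] with u hu
    refine (h_lim u hu).congr' ((eventually_ge_atTop u).mono fun T hT => ?_)
    exact (indicator_of_mem (mem_Ioc.2 ⟨hu, hT⟩) _).symm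

theorem setIntegral_pos_of_pos {α : Type*} [MeasurableSpace α] {μ : Measure α} {s : Set α}
    {f : α → ℝ} (hs : MeasurableSet s) (hμs : μ s ≠ 0) (hf : IntegrableOn f s μ)
    (hf_pos : ∀ x ∈ s, 0 < f x) : 0 < ∫ x in s, f x ∂μ := by
  rw [setIntegral_pos_iff_support_of_nonneg_ae
    ((ae_restrict_iff' hs).2 (ae_of_all _ fun x hx => (hf_pos x hx).le)) hf,
    inter_eq_self_of_subset_right
      (fun x hx => Function.mem_support.2 (hf_pos x hx).ne' : s ⊆ Function.support f)]
  exact pos_iff_ne_zero.2 hμs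

theorem integrableOn_exp_neg_mul_mul_Ioi {g : ℝ → ℝ} {b C : ℝ} (hb : 0 < b)
    (hg : ContinuousOn g (Ioi 0)) (hgC : ∀ t, 0 < t → |g t| ≤ C) :
    IntegrableOn (fun u => exp (-b * u) * g u) (Ioi 0) :=
  (exp_neg_integrableOn_Ioi 0 hb).mul_bdd (hg.aestronglyMeasurable measurableSet_Ioi)
    ((ae_restrict_iff' measurableSet_Ioi).2 (ae_of_all _ hgC))

noncomputable def covBV (g : ℝ → ℝ) (b T : ℝ) : ℝ :=
  g T - b * ∫ u in 0..T, exp (-b * u) * ((g (T - u) + g T - g u) / 2)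

theorem tendsto_intervalIntegral_exp_neg_mul_covariance {g : ℝ → ℝ} {b α2 C : ℝ} (hb : 0 < b)
    (hg_cont : ContinuousOn g (Ici 0)) (hgC : ∀ t, 0 ≤ t → |g t| ≤ C)
    (hg_lim : Tendsto g atTop (𝓝 α2)) :
    Tendsto (fun T => ∫ u in 0..T, exp (-b * u) * ((g (T - u) + g T - g u) / 2)) atTop
      (𝓝 (α2 / b - 1 / 2 * ∫ u in Ioi 0, exp (-b * u) * g u)) := by
  have h_exp : ∫ u in Ioi 0, exp (-b * u) = 1 / b := by
    rw [integral_exp_mul_Ioi (neg_lt_zero.2 hb)]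
    field_simp
    simp
  have h_val : ∫ u in Ioi 0, exp (-b * u) * ((α2 + α2 - g u) / 2)
      = α2 / b - 1 / 2 * ∫ u in Ioi 0, exp (-b * u) * g u := by
    have h_int := integrableOn_exp_neg_mul_mul_Ioi hb (hg_cont.mono Ioi_subset_Ici_self)
      fun t ht => hgC t ht.le
    have h_eq : (fun u => exp (-b * u) * ((α2 + α2 - g u) / 2))
        = fun u => α2 * exp (-b * u) - 1 / 2 * (exp (-b * u) * g u) := by
      ext u; ring
    rw [h_eq, integral_sub ((exp_neg_integrableOn_Ioi 0 hb).const_mul _) (h_int.const_mul _),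
      integral_const_mul, integral_const_mul, h_exp]
    ring
  rw [← h_val]
  refine intervalIntegral_tendsto_integral_Ioi_of_dominated
    (bound := fun u => exp (-b * u) * (3 * C / 2)) (fun T => ?_) (fun T u hu => ?_)
    ((exp_neg_integrableOn_Ioi 0 hb).mul_const _) (fun u hu => ?_)
  · refine ContinuousOn.aestronglyMeasurable ?_ measurableSet_Ioc
    have h_sub : ContinuousOn (fun u => g (T - u)) (Ioc 0 T) :=
      hg_cont.comp (continuousOn_const.sub continuousOn_id) fun u hu => sub_nonneg.2 hu.2
    exact (continuous_exp.comp_continuousOn (continuousOn_const.mul continuousOn_id)).mul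
      (((h_sub.add continuousOn_const).sub (hg_cont.mono fun u hu => hu.1.le)).div_const 2)
  · have h1 := abs_le.1 (hgC (T - u) (sub_nonneg.2 hu.2))
    have h2 := abs_le.1 (hgC T (hu.1.le.trans hu.2))
    have h3 := abs_le.1 (hgC u hu.1.le)
    rw [Real.norm_eq_abs, abs_mul, abs_of_pos (exp_pos _)]
    refine mul_le_mul_of_nonneg_left (abs_le.2 ⟨?_, ?_⟩) (exp_pos _).le <;> linarith
  · have h_shift : Tendsto (fun T => g (T - u)) atTop (𝓝 α2) :=
      hg_lim.comp (tendsto_atTop_add_const_right atTop (-u) tendsto_id)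
    exact tendsto_const_nhds.mul (((h_shift.add hg_lim).sub tendsto_const_nhds).div_const 2)

theorem tendsto_covBV {g : ℝ → ℝ} {b α2 C : ℝ} (hb : 0 < b) (hg_cont : ContinuousOn g (Ici 0))
    (hgC : ∀ t, 0 ≤ t → |g t| ≤ C) (hg_lim : Tendsto g atTop (𝓝 α2)) :
    Tendsto (covBV g b) atTop (𝓝 (b / 2 * ∫ u in Ioi 0, exp (-b * u) * g u)) := by
  have h_lim := hg_lim.sub
    ((tendsto_intervalIntegral_exp_neg_mul_covariance hb hg_cont hgC hg_lim).const_mul b)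
  rwa [mul_sub, mul_div_cancel₀ _ hb.ne', sub_sub_cancel, ← mul_assoc, mul_one_div] at h_lim

section Probability

variable {Ω : Type*} [MeasurableSpace Ω] {μ : Measure Ω}

theorem abs_mul_le_half_add_mul_self (x y : ℝ) : |x * y| ≤ (x * x + y * y) / 2 := by
  rw [abs_mul]
  nlinarith [sq_nonneg (|x| - |y|), abs_mul_abs_self x, abs_mul_abs_self y]

theorem integrable_mul_of_integrable_mul_self {X Y : Ω → ℝ} (hX : AEStronglyMeasurable X μ)
    (hY : AEStronglyMeasurable Y μ) (hX2 : Integrable (fun ω => X ω * X ω) μ)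
    (hY2 : Integrable (fun ω => Y ω * Y ω) μ) : Integrable (fun ω => X ω * Y ω) μ :=
  ((hX2.add hY2).div_const 2).mono' (hX.mul hY)
    (ae_of_all _ fun ω => abs_mul_le_half_add_mul_self (X ω) (Y ω))

theorem integral_abs_mul_le_half_add {X Y : Ω → ℝ} (hX2 : Integrable (fun ω => X ω * X ω) μ)
    (hY2 : Integrable (fun ω => Y ω * Y ω) μ) (hXY : Integrable (fun ω => X ω * Y ω) μ) :
    ∫ ω, |X ω * Y ω| ∂μ ≤ ((∫ ω, X ω * X ω ∂μ) + ∫ ω, Y ω * Y ω ∂μ) / 2 := by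
  rw [← integral_add hX2 hY2, ← integral_div]
  exact integral_mono hXY.abs ((hX2.add hY2).div_const 2) fun ω =>
    abs_mul_le_half_add_mul_self (X ω) (Y ω)

theorem ae_eq_zero_of_tendsto_integral_mul_self {X : ℕ → Ω → ℝ} {Y : Ω → ℝ}
    (hY : AEMeasurable Y μ) (hX : ∀ n, Integrable (fun ω => X n ω * X n ω) μ)
    (hXY : ∀ᵐ ω ∂μ, Tendsto (fun n => X n ω) atTop (𝓝 (Y ω)))
    (h0 : Tendsto (fun n => ∫ ω, X n ω * X n ω ∂μ) atTop (𝓝 0)) :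
    Y =ᵐ[μ] 0 := by
  have h_liminf : (fun ω => ENNReal.ofReal (Y ω * Y ω)) =ᵐ[μ]
      fun ω => liminf (fun n => ENNReal.ofReal (X n ω * X n ω)) atTop := by
    filter_upwards [hXY] with ω hω
    exact ((ENNReal.continuous_ofReal.tendsto _).comp (hω.mul hω)).liminf_eq.symm
  have h_lint : ∀ n, ∫⁻ ω, ENNReal.ofReal (X n ω * X n ω) ∂μ
      = ENNReal.ofReal (∫ ω, X n ω * X n ω ∂μ) := fun n =>
    (ofReal_integral_eq_lintegral_ofReal (hX n) (ae_of_all _ fun ω => mul_self_nonneg _)).symm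
  have h_fatou : ∫⁻ ω, ENNReal.ofReal (Y ω * Y ω) ∂μ = 0 := by
    refine le_antisymm ?_ zero_le
    calc ∫⁻ ω, ENNReal.ofReal (Y ω * Y ω) ∂μ
        = ∫⁻ ω, liminf (fun n => ENNReal.ofReal (X n ω * X n ω)) atTop ∂μ :=
          lintegral_congr_ae h_liminf
      _ ≤ liminf (fun n => ∫⁻ ω, ENNReal.ofReal (X n ω * X n ω) ∂μ) atTop :=
          lintegral_liminf_le' fun n => (hX n).aemeasurable.ennreal_ofReal
      _ = 0 := by
          simp_rw [h_lint]
          simpa [Function.comp_def] using ((ENNReal.continuous_ofReal.tendsto 0).comp h0).liminf_eq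
  filter_upwards [(lintegral_eq_zero_iff' (hY.mul hY).ennreal_ofReal).1 h_fatou] with ω hω
  simp only [Pi.zero_apply, ENNReal.ofReal_eq_zero] at hω
  exact mul_self_eq_zero.1 (le_antisymm hω (mul_self_nonneg _))
section Fubini

variable [SFinite μ] {X : Ω → ℝ} {B : ℝ → Ω → ℝ} {w : ℝ → ℝ} {a b C : ℝ}

theorem integrable_prod_weight_mul (hX : Measurable X) (hB : Measurable (Function.uncurry B))
    (hw : Continuous w) (hXB : ∀ t ∈ Ioc a b, Integrable (fun ω => X ω * B t ω) μ)
    (hC : ∀ t ∈ Ioc a b, ∫ ω, |X ω * B t ω| ∂μ ≤ C) :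
    Integrable (fun p : Ω × ℝ => w p.2 * (X p.1 * B p.2 p.1))
      (μ.prod (volume.restrict (Ioc a b))) := by
  obtain ⟨M, hM⟩ := isCompact_Icc.exists_bound_of_continuousOn (hw.continuousOn (s := Icc a b))
  have hmeas : Measurable fun p : Ω × ℝ => w p.2 * (X p.1 * B p.2 p.1) :=
    (hw.measurable.comp measurable_snd).mul
      ((hX.comp measurable_fst).mul (hB.comp measurable_swap))
  rw [integrable_prod_iff' hmeas.aestronglyMeasurable]
  refine ⟨?_, ?_⟩
  · filter_upwards [ae_restrict_mem measurableSet_Ioc] with t ht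
    exact (hXB t ht).const_mul (w t)
  · refine (integrable_const (M * C)).mono'
      hmeas.norm.stronglyMeasurable.integral_prod_left'.aestronglyMeasurable ?_
    filter_upwards [ae_restrict_mem measurableSet_Ioc] with t ht
    have hwt : |w t| ≤ M := hM t (Ioc_subset_Icc_self ht)
    have h_nonneg : 0 ≤ ∫ ω, |X ω * B t ω| ∂μ := integral_nonneg fun ω => abs_nonneg _
    simp_rw [norm_mul (w t), Real.norm_eq_abs]
    rw [integral_const_mul, abs_of_nonneg (mul_nonneg (abs_nonneg _) h_nonneg)]
    exact mul_le_mul hwt (hC t ht) h_nonneg ((abs_nonneg _).trans hwt)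

theorem integrable_mul_intervalIntegral (hab : a ≤ b) (hX : Measurable X)
    (hB : Measurable (Function.uncurry B)) (hw : Continuous w)
    (hXB : ∀ t ∈ Ioc a b, Integrable (fun ω => X ω * B t ω) μ)
    (hC : ∀ t ∈ Ioc a b, ∫ ω, |X ω * B t ω| ∂μ ≤ C) :
    Integrable (fun ω => X ω * ∫ t in a..b, w t * B t ω) μ := by
  refine (integrable_prod_weight_mul hX hB hw hXB hC).integral_prod_left.congr
    (ae_of_all _ fun ω => ?_)
  simp only [intervalIntegral.integral_of_le hab, ← integral_const_mul, mul_left_comm (X ω)]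

theorem integral_mul_intervalIntegral_comm (hab : a ≤ b) (hX : Measurable X)
    (hB : Measurable (Function.uncurry B)) (hw : Continuous w)
    (hXB : ∀ t ∈ Ioc a b, Integrable (fun ω => X ω * B t ω) μ)
    (hC : ∀ t ∈ Ioc a b, ∫ ω, |X ω * B t ω| ∂μ ≤ C) :
    ∫ ω, X ω * (∫ t in a..b, w t * B t ω) ∂μ = ∫ t in a..b, w t * ∫ ω, X ω * B t ω ∂μ := by
  have h := integral_integral_swap (f := fun ω t => w t * (X ω * B t ω))
    (integrable_prod_weight_mul hX hB hw hXB hC)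
  simp only [intervalIntegral.integral_of_le hab, ← integral_const_mul, mul_left_comm (X _)]
  exact h

end Fubini

end Probability

section StationaryIncrements

variable {Ω : Type*} [MeasurableSpace Ω] {P : Measure Ω} {B : ℝ → Ω → ℝ} {g : ℝ → ℝ}

def HasStationaryIncrementCov (P : Measure Ω) (B : ℝ → Ω → ℝ) (g : ℝ → ℝ) : Prop :=
  ∀ s, 0 ≤ s → ∀ t, 0 ≤ t → ∫ ω, B s ω * B t ω ∂P = (g t + g s - g |t - s|) / 2

namespace HasStationaryIncrementCov

theorem integral_mul_self (hcov : HasStationaryIncrementCov P B g) (hg_zero : g 0 = 0) {t : ℝ}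
    (ht : 0 ≤ t) : ∫ ω, B t ω * B t ω ∂P = g t := by
  rw [hcov t ht t ht, sub_self, abs_zero, hg_zero]
  ring

theorem ae_eq_zero_of_pos_right (hcov : HasStationaryIncrementCov P B g) (hg_zero : g 0 = 0)
    {c : ℝ} (hc : 0 ≤ c) (hB_meas : AEMeasurable (B c) P)
    (hB_cont : ∀ᵐ ω ∂P, Continuous fun t => B t ω) (hg_cont : ContinuousWithinAt g (Ioi c) c)
    (hgc : g c ≤ 0) (hg_right : ∀ s, c < s → 0 < g s) : B c =ᵐ[P] 0 := by
  set s : ℕ → ℝ := fun n => c + 1 / (n + 1)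
  have hs_gt : ∀ n, c < s n := fun n => lt_add_of_pos_right _ (by positivity)
  have hs_lim : Tendsto s atTop (𝓝 c) := by
    simpa [s] using (tendsto_const_nhds (x := c)).add tendsto_one_div_add_atTop_nhds_zero_nat
  have hvar : ∀ n, ∫ ω, B (s n) ω * B (s n) ω ∂P = g (s n) := fun n =>
    hcov.integral_mul_self hg_zero (hc.trans (hs_gt n).le)
  have hg_lim : Tendsto (fun n => g (s n)) atTop (𝓝 (g c)) :=
    hg_cont.tendsto.comp (tendsto_nhdsWithin_iff.2 ⟨hs_lim, Eventually.of_forall hs_gt⟩)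
  have hgc_zero : g c = 0 :=
    le_antisymm hgc (ge_of_tendsto' hg_lim fun n => (hg_right _ (hs_gt n)).le)
  refine ae_eq_zero_of_tendsto_integral_mul_self (X := fun n => B (s n)) hB_meas
    (fun n => .of_integral_ne_zero ?_) ?_ ?_
  · exact (hvar n).trans_ne (hg_right _ (hs_gt n)).ne'
  · filter_upwards [hB_cont] with ω hω
    exact (hω.tendsto c).comp hs_lim
  · simpa only [hvar, hgc_zero] using hg_lim

theorem pos_of_eventually_pos (hcov : HasStationaryIncrementCov P B g) (hg_zero : g 0 = 0)
    (hB_meas : ∀ t, AEMeasurable (B t) P) (hB_cont : ∀ᵐ ω ∂P, Continuous fun t => B t ω)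
    (hg_cont : ContinuousOn g (Ioi 0)) (hg_ev : ∀ᶠ t in atTop, 0 < g t) :
    ∀ t, 0 < t → 0 < g t := by
  intro t₀ ht₀
  by_contra! hgt₀
  set S := Ici t₀ ∩ g ⁻¹' Iic 0
  have hS_closed : IsClosed S :=
    (hg_cont.mono (Ici_subset_Ioi.2 ht₀)).preimage_isClosed_of_isClosed isClosed_Ici isClosed_Iic
  have hS_bdd : BddAbove S := by
    obtain ⟨M, hM⟩ := eventually_atTop.1 hg_ev
    exact ⟨M, fun s hs => le_of_not_ge fun h => (hM s h).not_ge hs.2⟩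
  set c := sSup S
  have hcS : c ∈ S := hS_closed.csSup_mem ⟨t₀, mem_Ici.2 le_rfl, hgt₀⟩ hS_bdd
  have hc_pos : 0 < c := ht₀.trans_le hcS.1
  have hBc : B c =ᵐ[P] 0 := hcov.ae_eq_zero_of_pos_right hg_zero hc_pos.le (hB_meas c) hB_cont
    (hg_cont.continuousAt (Ioi_mem_nhds hc_pos)).continuousWithinAt hcS.2 fun s hs =>
      lt_of_not_ge fun h => (le_csSup hS_bdd ⟨hcS.1.trans hs.le, h⟩).not_gt hs
  have hg_two_c : g (c + c) ≤ 0 := by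
    have h := hcov (c + c) (by positivity) c hc_pos.le
    rw [integral_congr_ae (hBc.mono fun ω h => by simp [h] : _ =ᵐ[P] fun _ => (0 : ℝ)),
      integral_zero, show c - (c + c) = -c by ring, abs_neg, abs_of_pos hc_pos] at h
    linarith
  have h_two_c_mem : c + c ∈ S := ⟨mem_Ici.2 (by linarith [mem_Ici.1 hcS.1]), hg_two_c⟩
  exact (le_csSup hS_bdd h_two_c_mem).not_gt (by linarith)

theorem integral_mul_sub_eq_covBV [SFinite P] (hcov : HasStationaryIncrementCov P B g)
    (hg_zero : g 0 = 0) (hB_meas : Measurable (Function.uncurry B)) {b T C : ℝ} (hT : 0 < T)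
    (hsq : ∀ t ∈ Ioc 0 T, Integrable (fun ω => B t ω * B t ω) P)
    (hgC : ∀ t ∈ Ioc 0 T, g t ≤ C) :
    ∫ ω, B T ω * (B T ω - b * (exp (-b * T) * ∫ t in 0..T, exp (b * t) * B t ω)) ∂P
      = covBV g b T := by
  have hT_mem : T ∈ Ioc 0 T := ⟨hT, le_rfl⟩
  have hBt : ∀ t, Measurable (B t) := fun t => hB_meas.comp measurable_prodMk_left
  have hXB : ∀ t ∈ Ioc 0 T, Integrable (fun ω => B T ω * B t ω) P := fun t ht =>
    integrable_mul_of_integrable_mul_self (hBt T).aestronglyMeasurable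
      (hBt t).aestronglyMeasurable (hsq T hT_mem) (hsq t ht)
  have hXB_le : ∀ t ∈ Ioc 0 T, ∫ ω, |B T ω * B t ω| ∂P ≤ C := fun t ht => by
    have h := integral_abs_mul_le_half_add (hsq T hT_mem) (hsq t ht) (hXB t ht)
    rw [hcov.integral_mul_self hg_zero hT.le, hcov.integral_mul_self hg_zero ht.1.le] at h
    linarith [hgC T hT_mem, hgC t ht]
  have hw : Continuous fun t => exp (b * t) := by fun_prop
  have h_cov : ∀ t ∈ uIcc 0 T, exp (b * t) * ∫ ω, B T ω * B t ω ∂P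
      = exp (b * t) * ((g t + g T - g (T - t)) / 2) := fun t ht => by
    rw [uIcc_of_le hT.le] at ht
    rw [hcov T hT.le t ht.1, abs_sub_comm, abs_of_nonneg (sub_nonneg.2 ht.2)]
  calc ∫ ω, B T ω * (B T ω - b * (exp (-b * T) * ∫ t in 0..T, exp (b * t) * B t ω)) ∂P
      = ∫ ω, B T ω * B T ω ∂P
          - b * exp (-b * T) * ∫ ω, B T ω * (∫ t in 0..T, exp (b * t) * B t ω) ∂P := by
        rw [← integral_const_mul, ← integral_sub (hsq T hT_mem)
          ((integrable_mul_intervalIntegral hT.le (hBt T) hB_meas hw hXB hXB_le).const_mul _)]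
        congr 1 with ω
        ring
    _ = g T - b * (exp (-b * T) * ∫ t in 0..T, exp (b * t) * ((g t + g T - g (T - t)) / 2)) := by
        rw [hcov.integral_mul_self hg_zero hT.le,
          integral_mul_intervalIntegral_comm hT.le (hBt T) hB_meas hw hXB hXB_le,
          intervalIntegral.integral_congr h_cov]
        ring
    _ = covBV g b T := by
        rw [exp_neg_mul_intervalIntegral_exp_mul]
        simp only [sub_sub_cancel]
        rfl

end HasStationaryIncrementCov

end StationaryIncrements

theorem cov_BV_limit_general
    {Ω : Type*} [MeasurableSpace Ω] (P : Measure Ω) [IsProbabilityMeasure P]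
    (b α2 β2 : ℝ) (hb : 0 < b) (hα2 : 0 < α2)
    (g : ℝ → ℝ)
    (hg_cont : ContinuousOn g (Set.Ici 0))
    (hg_bdd : ∃ C, ∀ t, 0 ≤ t → |g t| ≤ C)
    (hg_zero : g 0 = 0)
    (hg_lim : Tendsto g atTop (nhds α2))
    (hβ2 : β2 = b / 2 * ∫ u in Set.Ioi (0:ℝ), Real.exp (-b * u) * g u)
    (B : ℝ → Ω → ℝ)
    (hB_meas : Measurable fun p : ℝ × Ω => B p.1 p.2)
    (hB_cont : ∀ᵐ ω ∂P, Continuous fun t => B t ω)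
    (hB_cov : ∀ s, 0 ≤ s → ∀ t, 0 ≤ t →
      ∫ ω, B s ω * B t ω ∂P = (g t + g s - g |t - s|) / 2)
    (U : ℝ → Ω → ℝ)
    (hU : ∀ T ω, U T ω = Real.exp (-b * T) * ∫ t in (0:ℝ)..T, Real.exp (b * t) * B t ω)
    (V : ℝ → Ω → ℝ)
    (hV : ∀ T ω, V T ω = B T ω - b * U T ω)
    :
    Tendsto (fun T => ∫ ω, B T ω * V T ω ∂P) atTop (nhds β2) ∧
    0 < β2 ∧
    ¬ Tendsto (fun T => ∫ ω, B T ω * V T ω ∂P) atTop (nhds 0) := by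
  obtain ⟨C, hC⟩ := hg_bdd
  have hcov : HasStationaryIncrementCov P B g := hB_cov
  have hg_pos : ∀ t, 0 < t → 0 < g t :=
    hcov.pos_of_eventually_pos hg_zero (fun t => (hB_meas.comp measurable_prodMk_left).aemeasurable)
      hB_cont (hg_cont.mono Ioi_subset_Ici_self) (hg_lim.eventually (eventually_gt_nhds hα2))
  have hsq : ∀ t, 0 < t → Integrable (fun ω => B t ω * B t ω) P := fun t ht =>
    .of_integral_ne_zero (by rw [hcov.integral_mul_self hg_zero ht.le]; exact (hg_pos t ht).ne')
  have hBV : ∀ T, 0 < T → ∫ ω, B T ω * V T ω ∂P = covBV g b T := fun T hT => by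
    simp_rw [hV, hU]
    exact hcov.integral_mul_sub_eq_covBV hg_zero hB_meas hT (fun t ht => hsq t ht.1)
      fun t ht => (le_abs_self _).trans (hC t ht.1.le)
  have hlim : Tendsto (fun T => ∫ ω, B T ω * V T ω ∂P) atTop (𝓝 β2) := by
    rw [hβ2]
    exact (tendsto_covBV hb hg_cont hC hg_lim).congr'
      ((eventually_gt_atTop 0).mono fun T hT => (hBV T hT).symm)
  have hβ2_pos : 0 < β2 := by
    rw [hβ2]
    refine mul_pos (by positivity) (setIntegral_pos_of_pos measurableSet_Ioi (by simp)
      (integrableOn_exp_neg_mul_mul_Ioi hb (hg_cont.mono Ioi_subset_Ici_self)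
        fun t ht => hC t ht.le) fun u hu => mul_pos (exp_pos _) (hg_pos u hu))
  exact ⟨hlim, hβ2_pos, fun h0 => hβ2_pos.ne' (tendsto_nhds_unique hlim h0)⟩

theorem cov_BV_limit
    {Ω : Type*} [MeasurableSpace Ω] (P : Measure Ω) [IsProbabilityMeasure P]
    (b α2 β2 : ℝ) (hb : 0 < b) (hα2 : 0 < α2)
    (g : ℝ → ℝ)
    (hg_cont : ContinuousOn g (Set.Ici 0))
    (hg_bdd : ∃ C, ∀ t, 0 ≤ t → |g t| ≤ C)
    (hg_nonneg : ∀ t, 0 ≤ t → 0 ≤ g t)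
    (hg_zero : g 0 = 0)
    (hg_lim : Tendsto g atTop (nhds α2))
    (hβ2 : β2 = b / 2 * ∫ u in Set.Ioi (0:ℝ), Real.exp (-b * u) * g u)
    (B : ℝ → Ω → ℝ)
    (hB_meas : Measurable fun p : ℝ × Ω => B p.1 p.2)
    (hB_cont : ∀ᵐ ω ∂P, Continuous fun t => B t ω)
    (hB_zero : ∀ ω, B 0 ω = 0)
    (hB_mean : ∀ t, 0 ≤ t → ∫ ω, B t ω ∂P = 0)
    (hB_cov : ∀ s, 0 ≤ s → ∀ t, 0 ≤ t →
      ∫ ω, B s ω * B t ω ∂P = (g t + g s - g |t - s|) / 2)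
    (U : ℝ → Ω → ℝ)
    (hU : ∀ T ω, U T ω = Real.exp (-b * T) * ∫ t in (0:ℝ)..T, Real.exp (b * t) * B t ω)
    (V : ℝ → Ω → ℝ)
    (hV : ∀ T ω, V T ω = B T ω - b * U T ω)
    :
    Tendsto (fun T => ∫ ω, B T ω * V T ω ∂P) atTop (nhds β2) ∧
    0 < β2 ∧
    ¬ Tendsto (fun T => ∫ ω, B T ω * V T ω ∂P) atTop (nhds 0) :=
  cov_BV_limit_general P b α2 β2 hb hα2 g hg_cont hg_bdd hg_zero hg_lim hβ2 B hB_meas hB_cont hB_cov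
    U hU V hV
end
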